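/- There exists a universal constant C > 0 such that for every inner function f, every ξ ∈ 𝕋 at which the angular derivative |f'(ξ)| is finite, and every 0 < r < 1, one has |f'(rξ)| ≤ (1-|f(rξ)|²)/(1-r²) ≤ C |f'(ξ)|. -/

import Mathlib

open Complex MeasureTheory Metric Set Filter
open scoped ENNReal

/-- The hyperbolic derivative of `f` at `z`. -/
noncomputable def hypDeriv (f : ℂ → ℂ) (z : ℂ) : ℝ :=
  (1 - ‖z‖ ^ 2) * ‖deriv f z‖ / (1 - ‖f z‖ ^ 2)

/-- The point `e^{iθ}` of the unit circle. -/
noncomputable def circlePoint (θ : ℝ) : ℂ := Complex.exp (θ * Complex.I)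

/-- Normalized Lebesgue measure on the unit circle, via the parametrization `θ ↦ e^{iθ}`,
`θ ∈ (0, 2π]`. -/
noncomputable def mT : Measure ℝ :=
  (ENNReal.ofReal (2 * Real.pi))⁻¹ • (volume.restrict (Ioc (0:ℝ) (2 * Real.pi)))

/-- `f` is an inner function: a holomorphic self-map of the unit disc whose radial limits have
modulus one almost everywhere on the circle. -/
def IsInner (f : ℂ → ℂ) : Prop :=
  DifferentiableOn ℂ f (ball (0:ℂ) 1) ∧ (∀ z ∈ ball (0:ℂ) 1, f z ∈ ball (0:ℂ) 1) ∧
    ∀ᵐ θ ∂mT, Tendsto (fun r : ℝ => ‖f ((r:ℂ) * circlePoint θ)‖)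
      (nhdsWithin 1 (Iio 1)) (nhds 1)

/-- `f` has (finite) angular derivative of modulus `L` at the boundary point `ξ`. -/
def HasAngularDeriv (f : ℂ → ℂ) (ξ : ℂ) (L : ℝ) : Prop :=
  Tendsto (fun r : ℝ => (1 - ‖f ((r:ℂ) * ξ)‖) / (1 - r))
    (nhdsWithin 1 (Iio 1)) (nhds L)

/-- The accumulated Möbius distortion `A(f)(ξ) = ∫₀¹ (1 - D_h f(rξ)) ⬝ 2/(1-r²) dr`. -/
noncomputable def accumDistortion (f : ℂ → ℂ) (ξ : ℂ) : ℝ≥0∞ :=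
  ∫⁻ r in Ioo (0:ℝ) 1, ENNReal.ofReal ((1 - hypDeriv f ((r:ℂ) * ξ)) * (2 / (1 - r ^ 2)))

noncomputable def moeb (a z : ℂ) : ℂ := (a - z) / (1 - (starRingEnd ℂ a) * z)

lemma key_identity (a z : ℂ) :
    ‖1 - (starRingEnd ℂ a) * z‖ ^ 2 =
      ‖a - z‖ ^ 2 + (1 - ‖a‖ ^ 2) * (1 - ‖z‖ ^ 2) := by
  simp only [Complex.sq_norm, Complex.normSq_apply, Complex.sub_re, Complex.sub_im,
    Complex.mul_re, Complex.mul_im, Complex.one_re, Complex.one_im,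
    Complex.conj_re, Complex.conj_im]
  ring

lemma den_ne (a z : ℂ) (ha : ‖a‖ < 1) (hz : ‖z‖ ≤ 1) :
    1 - (starRingEnd ℂ a) * z ≠ 0 := by
  intro h
  have h1 : ‖(starRingEnd ℂ a) * z‖ < 1 := by
    rw [norm_mul, Complex.norm_conj]
    calc ‖a‖ * ‖z‖ ≤ ‖a‖ * 1 :=
          mul_le_mul_of_nonneg_left hz (norm_nonneg a)
      _ = ‖a‖ := mul_one _
      _ < 1 := ha
  have : (starRingEnd ℂ a) * z = 1 := by linear_combination -h
  rw [this] at h1; simp at h1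

lemma moeb_abs_lt (a z : ℂ) (ha : ‖a‖ < 1) (hz : ‖z‖ < 1) :
    ‖moeb a z‖ < 1 := by
  have hd := den_ne a z ha hz.le
  have hdpos : 0 < ‖1 - (starRingEnd ℂ a) * z‖ := by
    simpa [norm_pos_iff] using hd
  rw [moeb, norm_div, div_lt_one hdpos]
  have h2 : ‖a - z‖ ^ 2 < ‖1 - (starRingEnd ℂ a) * z‖ ^ 2 := by
    rw [key_identity]
    have h1 : ‖a‖ ^ 2 < 1 := by nlinarith [norm_nonneg a]
    have h2 : ‖z‖ ^ 2 < 1 := by nlinarith [norm_nonneg z]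
    nlinarith
  exact lt_of_pow_lt_pow_left₀ 2 hdpos.le h2

lemma moeb_invol (a z : ℂ) (ha : ‖a‖ < 1) (hz : ‖z‖ < 1) :
    moeb a (moeb a z) = z := by
  have hd := den_ne a z ha hz.le
  have ha2 : (1 : ℂ) - (starRingEnd ℂ a) * a ≠ 0 := den_ne a a ha ha.le
  have ha3 : (1 : ℂ) - a * (starRingEnd ℂ a) ≠ 0 := by
    rwa [mul_comm] at ha2
  rw [moeb, moeb]
  have hd' : 1 - z * (starRingEnd ℂ) a ≠ 0 := by rwa [mul_comm] at hd
  field_simp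
  rw [div_eq_iff (by intro h; exact ha2 (by linear_combination h))]
  ring

lemma moeb_zero (a : ℂ) : moeb a 0 = a := by simp [moeb]

lemma moeb_self (a : ℂ) : moeb a a = 0 := by simp [moeb]

lemma moeb_diffOn (a : ℂ) (ha : ‖a‖ < 1) :
    DifferentiableOn ℂ (moeb a) (ball (0:ℂ) 1) := by
  intro z hz
  rw [mem_ball_zero_iff] at hz
  apply DifferentiableAt.differentiableWithinAt
  apply DifferentiableAt.div
  · exact (differentiable_const a).differentiableAt.sub differentiable_id.differentiableAt
  · exact (differentiable_const (1:ℂ)).differentiableAt.sub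
      ((differentiable_const _).differentiableAt.mul differentiable_id.differentiableAt)
  · exact den_ne a z ha hz.le

/-- Schwarz–Pick inequality (distance form). -/
lemma schwarz_pick (f : ℂ → ℂ) (hf : DifferentiableOn ℂ f (ball (0:ℂ) 1))
    (hmaps : ∀ z ∈ ball (0:ℂ) 1, f z ∈ ball (0:ℂ) 1)
    (z w : ℂ) (hz : ‖z‖ < 1) (hw : ‖w‖ < 1) :
    ‖moeb (f w) (f z)‖ ≤ ‖moeb w z‖ := by
  have hfw : ‖f w‖ < 1 := by
    simpa [mem_ball_zero_iff] using hmaps w (mem_ball_zero_iff.2 hw)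
  set g : ℂ → ℂ := fun u => moeb (f w) (f (moeb w u)) with hg
  have hmw : ∀ u ∈ ball (0:ℂ) 1, moeb w u ∈ ball (0:ℂ) 1 := fun u hu =>
    mem_ball_zero_iff.2 (moeb_abs_lt w u hw (mem_ball_zero_iff.1 hu))
  have hgd : DifferentiableOn ℂ g (ball (0:ℂ) 1) := by
    apply DifferentiableOn.comp (moeb_diffOn (f w) hfw)
    · exact DifferentiableOn.comp hf (moeb_diffOn w hw) hmw
    · exact fun u hu => hmaps _ (hmw u hu)
  have hgm : MapsTo g (ball (0:ℂ) 1) (ball (0:ℂ) 1) := fun u hu => by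
    have h1 := hmaps _ (hmw u hu)
    exact mem_ball_zero_iff.2 (moeb_abs_lt _ _ hfw (mem_ball_zero_iff.1 h1))
  have hg0 : g 0 = 0 := by simp [hg, moeb_zero, moeb_self]
  have hu : ‖moeb w z‖ < 1 := moeb_abs_lt w z hw hz
  have := Complex.norm_le_norm_of_mapsTo_ball hgd (hgm.mono_right ball_subset_closedBall) hg0 hu
  rw [hg] at this
  simp only at this
  rwa [moeb_invol w z hw hz] at this

lemma abs_one_sub_conj_mul_self (b : ℂ) (hb : ‖b‖ < 1) :
    ‖1 - (starRingEnd ℂ b) * b‖ = 1 - ‖b‖ ^ 2 := by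
  have h1 : (starRingEnd ℂ b) * b = ((‖b‖ ^ 2 : ℝ) : ℂ) := by
    rw [mul_comm, Complex.mul_conj, Complex.sq_norm]
  rw [h1]
  have h2 : (1 : ℂ) - ((‖b‖ ^ 2 : ℝ) : ℂ) = (((1 - ‖b‖ ^ 2 : ℝ)) : ℂ) := by
    push_cast; ring
  rw [h2, Complex.norm_real, Real.norm_eq_abs]
  exact abs_of_nonneg (by nlinarith [norm_nonneg b])

lemma deriv_bound (f : ℂ → ℂ) (hf : DifferentiableOn ℂ f (ball (0:ℂ) 1))
    (hmaps : ∀ z ∈ ball (0:ℂ) 1, f z ∈ ball (0:ℂ) 1)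
    (z : ℂ) (hz : ‖z‖ < 1) :
    ‖deriv f z‖ ≤ (1 - ‖f z‖ ^ 2) / (1 - ‖z‖ ^ 2) := by
  have hzball : z ∈ ball (0:ℂ) 1 := mem_ball_zero_iff.2 hz
  have hfz : ‖f z‖ < 1 := mem_ball_zero_iff.1 (hmaps z hzball)
  have hder : HasDerivAt f (deriv f z) z :=
    (hf.differentiableAt (isOpen_ball.mem_nhds hzball)).hasDerivAt
  have hcont : ContinuousAt f z := hder.continuousAt
  -- T1 : slope tends to deriv
  have T1 : Tendsto (fun w => ‖f w - f z‖ / ‖w - z‖)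
      (nhdsWithin z {z}ᶜ) (nhds (‖deriv f z‖)) := by
    have h := hasDerivAt_iff_tendsto_slope.1 hder
    have h2 : Tendsto (fun w => ‖slope f z w‖) (nhdsWithin z {z}ᶜ)
        (nhds (‖deriv f z‖)) := (continuous_norm.continuousAt).tendsto.comp h
    refine h2.congr fun w => ?_
    rw [slope_def_field, norm_div]
  -- T2 : Moebius denominators quotient tends to the hyperbolic ratio
  have hden : ‖1 - (starRingEnd ℂ z) * z‖ = 1 - ‖z‖ ^ 2 :=
    abs_one_sub_conj_mul_self z hz
  have hdenf : ‖1 - (starRingEnd ℂ (f z)) * f z‖ = 1 - ‖f z‖ ^ 2 :=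
    abs_one_sub_conj_mul_self (f z) hfz
  have cnum : ContinuousAt (fun w => ‖1 - (starRingEnd ℂ (f w)) * f z‖) z := by
    apply continuous_norm.continuousAt.comp
    exact (continuousAt_const.sub (((Complex.continuous_conj.continuousAt.comp
      hcont)).mul continuousAt_const))
  have cden : ContinuousAt (fun w : ℂ => ‖1 - (starRingEnd ℂ w) * z‖) z := by
    apply continuous_norm.continuousAt.comp
    exact continuousAt_const.sub (Complex.continuous_conj.continuousAt.mul continuousAt_const)
  have hdenpos : (0:ℝ) < 1 - ‖z‖ ^ 2 := by nlinarith [norm_nonneg z]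
  have T2 : Tendsto (fun w => ‖1 - (starRingEnd ℂ (f w)) * f z‖ /
      ‖1 - (starRingEnd ℂ w) * z‖) (nhdsWithin z {z}ᶜ)
      (nhds ((1 - ‖f z‖ ^ 2) / (1 - ‖z‖ ^ 2))) := by
    have T2' := cnum.tendsto.div cden.tendsto (by rw [hden]; exact hdenpos.ne')
    rw [hdenf, hden] at T2'
    exact T2'.mono_left nhdsWithin_le_nhds
  -- eventual inequality
  have hev : ∀ᶠ w in nhdsWithin z {z}ᶜ,
      ‖f w - f z‖ / ‖w - z‖ ≤
        ‖1 - (starRingEnd ℂ (f w)) * f z‖ / ‖1 - (starRingEnd ℂ w) * z‖ := by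
    have hball : ∀ᶠ w in nhdsWithin z {z}ᶜ, w ∈ ball (0:ℂ) 1 :=
      eventually_nhdsWithin_of_eventually_nhds (isOpen_ball.eventually_mem hzball)
    filter_upwards [hball, self_mem_nhdsWithin] with w hw hwz
    have hw1 : ‖w‖ < 1 := mem_ball_zero_iff.1 hw
    have hsp := schwarz_pick f hf hmaps z w hz hw1
    rw [moeb, moeb, norm_div, norm_div] at hsp
    have hnz : (0:ℝ) < ‖w - z‖ := by
      rw [norm_pos_iff, sub_ne_zero]
      exact fun h => hwz (by simp [h])
    have hd1 : (0:ℝ) < ‖1 - (starRingEnd ℂ (f w)) * f z‖ := by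
      rw [norm_pos_iff]
      exact den_ne (f w) (f z) (mem_ball_zero_iff.1 (hmaps w hw)) hfz.le
    have hd2 : (0:ℝ) < ‖1 - (starRingEnd ℂ w) * z‖ := by
      rw [norm_pos_iff]
      exact den_ne w z hw1 hz.le
    rw [div_le_div_iff₀ hd1 hd2] at hsp
    rw [div_le_div_iff₀ hnz hd2]
    nlinarith [hsp]
  exact le_of_tendsto_of_tendsto T1 T2 hev

set_option maxHeartbeats 1600000 in
/-- Pure algebra: from the squared pseudo-hyperbolic contraction, deduce the radial one. -/
lemma alg_step (β γ r s E D : ℝ) (hβ0 : 0 ≤ β) (hβ1 : β < 1) (hγ0 : 0 ≤ γ) (hγ1 : γ < 1)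
    (hr0 : 0 < r) (hrs : r < s) (hs1 : s < 1) (hE0 : 0 ≤ E)
    (hDkey : D ^ 2 = E ^ 2 + (1 - β ^ 2) * (1 - γ ^ 2)) (hDle : 1 - β * γ ≤ D)
    (hsp2 : E * (1 - r * s) ≤ (s - r) * D) (hγβ : γ - β ≤ E) :
    (γ - β) * (1 - r * s) ≤ (s - r) * (1 - β * γ) := by
  have hrs0 : (0:ℝ) < 1 - r * s := by nlinarith
  have hβγ0 : (0:ℝ) < 1 - β * γ := by nlinarith
  have hsr0 : (0:ℝ) < s - r := by linarith
  have h1 : (E * (1 - r * s)) ^ 2 ≤ ((s - r) * D) ^ 2 :=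
    pow_le_pow_left₀ (mul_nonneg hE0 hrs0.le) hsp2 2
  have h2 : E ^ 2 * ((1 - r ^ 2) * (1 - s ^ 2)) ≤ (s - r) ^ 2 * ((1 - β ^ 2) * (1 - γ ^ 2)) := by
    nlinarith [h1, hDkey]
  have h3 : (γ - β) ^ 2 ≤ E ^ 2 := by
    rcases le_or_gt (γ - β) 0 with h | h
    · nlinarith
    · nlinarith
  have hr2 : r ^ 2 < 1 := by nlinarith
  have hs2 : s ^ 2 < 1 := by nlinarith
  have hfac : (0:ℝ) ≤ (1 - r ^ 2) * (1 - s ^ 2) := mul_nonneg (by linarith) (by linarith)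
  have h5 := le_trans (mul_le_mul_of_nonneg_right h3 hfac) h2
  have h4 : ((γ - β) * (1 - r * s)) ^ 2 ≤ ((s - r) * (1 - β * γ)) ^ 2 := by nlinarith [h5]
  rcases le_or_gt (γ - β) 0 with h | h
  · nlinarith
  · by_contra hcon
    push_neg at hcon
    have hX0 : 0 < (γ - β) * (1 - r * s) := mul_pos (by linarith) hrs0
    have hsum : 0 < (γ - β) * (1 - r * s) + (s - r) * (1 - β * γ) := by positivity
    nlinarith [h4, mul_pos (show 0 < (γ - β) * (1 - r * s) - (s - r) * (1 - β * γ) by linarith) hsum]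

/-- Radial Schwarz–Pick: the pseudo-hyperbolic contraction along a radius. -/
lemma radial_sp (f : ℂ → ℂ) (hf : DifferentiableOn ℂ f (ball (0:ℂ) 1))
    (hmaps : ∀ z ∈ ball (0:ℂ) 1, f z ∈ ball (0:ℂ) 1)
    (ξ : ℂ) (hxi : ‖ξ‖ = 1) (r s : ℝ) (hr0 : 0 < r) (hrs : r < s) (hs1 : s < 1) :
    (‖f ((s:ℂ) * ξ)‖ - ‖f ((r:ℂ) * ξ)‖) * (1 - r * s) ≤
      (s - r) * (1 - ‖f ((r:ℂ) * ξ)‖ * ‖f ((s:ℂ) * ξ)‖) := by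
  have hr1 : r < 1 := hrs.trans hs1
  have hs0 : 0 < s := hr0.trans hrs
  have habsr : ‖(r:ℂ) * ξ‖ = r := by
    rw [norm_mul, Complex.norm_real, Real.norm_eq_abs, hxi, mul_one, abs_of_pos hr0]
  have habss : ‖(s:ℂ) * ξ‖ = s := by
    rw [norm_mul, Complex.norm_real, Real.norm_eq_abs, hxi, mul_one, abs_of_pos hs0]
  have hrb : ‖(r:ℂ) * ξ‖ < 1 := by rw [habsr]; exact hr1
  have hsb : ‖(s:ℂ) * ξ‖ < 1 := by rw [habss]; exact hs1
  set b := f ((r:ℂ) * ξ) with hb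
  set c := f ((s:ℂ) * ξ) with hc
  have hbb : ‖b‖ < 1 := mem_ball_zero_iff.1 (hmaps _ (mem_ball_zero_iff.2 hrb))
  have hcb : ‖c‖ < 1 := mem_ball_zero_iff.1 (hmaps _ (mem_ball_zero_iff.2 hsb))
  set β := ‖b‖
  set γ := ‖c‖
  have hβ0 : 0 ≤ β := norm_nonneg b
  have hγ0 : 0 ≤ γ := norm_nonneg c
  -- the Schwarz-Pick inequality
  have hsp := schwarz_pick f hf hmaps ((s:ℂ) * ξ) ((r:ℂ) * ξ) hsb hrb
  -- compute the right-hand side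
  have hxiconj : (starRingEnd ℂ ξ) * ξ = 1 := by
    rw [mul_comm, Complex.mul_conj]
    norm_cast
    rw [Complex.normSq_eq_norm_sq, hxi]; norm_num
  have hden2 : (1 : ℂ) - (starRingEnd ℂ ((r:ℂ)*ξ)) * ((s:ℂ)*ξ) = (((1 - r*s : ℝ)) : ℂ) := by
    rw [map_mul, Complex.conj_ofReal]
    push_cast
    linear_combination (-(r:ℂ)*(s:ℂ)) * hxiconj
  have hnum2 : ((r:ℂ)*ξ) - ((s:ℂ)*ξ) = (((r - s : ℝ)) : ℂ) * ξ := by push_cast; ring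
  have hrhs : ‖moeb ((r:ℂ)*ξ) ((s:ℂ)*ξ)‖ = (s - r) / (1 - r*s) := by
    rw [moeb, hden2, hnum2, norm_div, norm_mul, Complex.norm_real, Real.norm_eq_abs, Complex.norm_real, Real.norm_eq_abs, hxi,
      mul_one, abs_of_neg (by linarith), abs_of_pos (by nlinarith), neg_sub]
  rw [hrhs] at hsp
  -- the left-hand side, via key identity
  set E := ‖b - c‖ with hE
  set D := ‖1 - (starRingEnd ℂ b) * c‖ with hD
  have hDkey : D ^ 2 = E ^ 2 + (1 - β^2) * (1 - γ^2) := key_identity b c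
  have hE0 : 0 ≤ E := norm_nonneg _
  have hDle : 1 - β * γ ≤ D := by
    calc 1 - β * γ = 1 - ‖(starRingEnd ℂ b) * c‖ := by
          rw [norm_mul, Complex.norm_conj]
      _ ≤ ‖1 - (starRingEnd ℂ b) * c‖ := by
          have h1 := norm_sub_norm_le (1:ℂ) ((starRingEnd ℂ b) * c)
          simpa using h1
  have hD0 : 0 < D := by nlinarith
  have hsp2 : E * (1 - r*s) ≤ (s - r) * D := by
    have : ‖moeb b c‖ = E / D := by rw [moeb, norm_div]
    rw [this, div_le_div_iff₀ hD0 (by nlinarith : (0:ℝ) < 1 - r*s)] at hsp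
    linarith
  -- |γ - β| ≤ E
  have hγβ : γ - β ≤ E := by
    have := abs_norm_sub_norm_le b c
    have h2 : |β - γ| ≤ E := by rwa [hE]
    cases abs_le.1 h2 with
    | intro h3 h4 => linarith
  exact alg_step β γ r s E D hβ0 hbb hγ0 hcb hr0 hrs hs1 hE0 hDkey hDle hsp2 hγβ

lemma radial_bound (f : ℂ → ℂ) (hf : DifferentiableOn ℂ f (ball (0:ℂ) 1))
    (hmaps : ∀ z ∈ ball (0:ℂ) 1, f z ∈ ball (0:ℂ) 1)
    (ξ : ℂ) (hxi : ‖ξ‖ = 1) (L : ℝ)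
    (hL : Tendsto (fun r : ℝ => (1 - ‖f ((r:ℂ) * ξ)‖) / (1 - r))
      (nhdsWithin 1 (Iio 1)) (nhds L))
    (r : ℝ) (hr0 : 0 < r) (hr1 : r < 1) :
    (1 - ‖f ((r:ℂ) * ξ)‖ ^ 2) / (1 - r ^ 2) ≤ 4 * L := by
  set A : ℝ → ℝ := fun t => ‖f ((t:ℂ) * ξ)‖ with hA
  have hAmem : ∀ t : ℝ, 0 < t → t < 1 → A t < 1 := by
    intro t ht0 ht1
    have habs : ‖(t:ℂ) * ξ‖ = t := by
      rw [norm_mul, Complex.norm_real, Real.norm_eq_abs, hxi, mul_one, abs_of_pos ht0]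
    have hin : (t:ℂ) * ξ ∈ ball (0:ℂ) 1 := by
      rw [mem_ball_zero_iff, habs]; exact ht1
    have := hmaps _ hin
    rwa [mem_ball_zero_iff] at this
  have hA0 : ∀ t : ℝ, 0 ≤ A t := fun t => norm_nonneg _
  set φ : ℝ → ℝ := fun t => (1 - A t) * (1 + t) / ((1 - t) * (1 + A t)) with hφdef
  -- monotonicity from radial Schwarz-Pick
  have hmono : ∀ s ∈ Ioo r 1, φ r ≤ φ s := by
    intro s hs
    obtain ⟨hrs, hs1⟩ := hs
    have hs0 : 0 < s := hr0.trans hrs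
    have h1 : A r < 1 := hAmem r hr0 hr1
    have h2 : A s < 1 := hAmem s hs0 hs1
    have key := radial_sp f hf hmaps ξ hxi r s hr0 hrs hs1
    have d1 : (0:ℝ) < (1 - r) * (1 + A r) :=
      mul_pos (by linarith) (by nlinarith [hA0 r])
    have d2 : (0:ℝ) < (1 - s) * (1 + A s) :=
      mul_pos (by linarith) (by nlinarith [hA0 s])
    show (1 - A r) * (1 + r) / ((1 - r) * (1 + A r)) ≤
      (1 - A s) * (1 + s) / ((1 - s) * (1 + A s))
    rw [div_le_div_iff₀ d1 d2]
    nlinarith [key, hA0 r, hA0 s]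
  -- the limit of φ at 1⁻ is L
  have hlim1s : Tendsto (fun s : ℝ => 1 - s) (nhdsWithin 1 (Iio 1)) (nhds 0) := by
    have hcont : Continuous fun s : ℝ => 1 - s := continuous_const.sub continuous_id
    have := hcont.tendsto 1
    norm_num at this
    exact this.mono_left nhdsWithin_le_nhds
  have hAone : Tendsto A (nhdsWithin 1 (Iio 1)) (nhds 1) := by
    have h0 : Tendsto (fun s : ℝ => (1 - A s) / (1 - s) * (1 - s))
        (nhdsWithin 1 (Iio 1)) (nhds (L * 0)) := hL.mul hlim1s
    rw [mul_zero] at h0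
    have hcongr : Tendsto (fun s : ℝ => 1 - A s) (nhdsWithin 1 (Iio 1)) (nhds 0) := by
      refine h0.congr' ?_
      filter_upwards [self_mem_nhdsWithin] with s hs
      have : (1:ℝ) - s ≠ 0 := by simp only [mem_Iio] at hs; intro h; linarith
      field_simp
    have := (tendsto_const_nhds (x := (1:ℝ))).sub hcongr
    simpa using this
  have hφlim : Tendsto φ (nhdsWithin 1 (Iio 1)) (nhds L) := by
    have heq : ∀ s : ℝ, φ s = (1 - A s) / (1 - s) * ((1 + s) / (1 + A s)) := by
      intro s
      simp only [hφdef]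
      rw [div_mul_div_comm]
    have h1s : Tendsto (fun s : ℝ => 1 + s) (nhdsWithin 1 (Iio 1)) (nhds 2) := by
      have hcont : Continuous fun s : ℝ => 1 + s := continuous_const.add continuous_id
      have := hcont.tendsto 1
      norm_num at this
      exact this.mono_left nhdsWithin_le_nhds
    have h1A : Tendsto (fun s : ℝ => 1 + A s) (nhdsWithin 1 (Iio 1)) (nhds 2) := by
      have := (tendsto_const_nhds (x := (1:ℝ))).add hAone
      norm_num at this
      exact this
    have hquot : Tendsto (fun s : ℝ => (1 + s) / (1 + A s)) (nhdsWithin 1 (Iio 1))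
        (nhds 1) := by
      have := h1s.div h1A (by norm_num)
      norm_num at this
      exact this
    have := hL.mul hquot
    rw [mul_one] at this
    exact this.congr fun s => (heq s).symm
  -- conclude φ r ≤ L
  have hφr : φ r ≤ L := by
    refine ge_of_tendsto hφlim ?_
    filter_upwards [Ioo_mem_nhdsLT_of_mem (⟨hr1, le_refl 1⟩ : (1:ℝ) ∈ Ioc r 1)] with s hs
    exact hmono s hs
  -- final algebra
  have h1 : A r < 1 := hAmem r hr0 hr1
  have h0 : 0 ≤ A r := hA0 r
  have d1 : (0:ℝ) < (1 - r) * (1 + A r) := mul_pos (by linarith) (by linarith)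
  have hφr' : (1 - A r) * (1 + r) ≤ L * ((1 - r) * (1 + A r)) := by
    rw [← div_le_iff₀ d1]
    exact hφr
  have hL0 : 0 ≤ L := by nlinarith
  show (1 - A r ^ 2) / (1 - r ^ 2) ≤ 4 * L
  rw [div_le_iff₀ (by nlinarith : (0:ℝ) < 1 - r ^ 2)]
  nlinarith [hφr', mul_nonneg hL0 (by linarith : (0:ℝ) ≤ 1 - r),
    mul_nonneg (mul_nonneg hL0 (by linarith : (0:ℝ) ≤ 1 - r)) (by linarith : (0:ℝ) ≤ r)]

/-- There is a universal constant `C` such that for every inner function `f`, every boundary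
point `ξ` at which the angular derivative `L` is finite, and every `0 < r < 1`,
`|f'(rξ)| ≤ (1-|f(rξ)|²)/(1-r²) ≤ C ⬝ L`. -/
theorem schwarz_pick_and_radial_bound :
    ∃ C : ℝ, 0 < C ∧
      ∀ f : ℂ → ℂ, IsInner f →
        ∀ ξ : ℂ, ‖ξ‖ = 1 →
          ∀ L : ℝ, HasAngularDeriv f ξ L →
            ∀ r : ℝ, 0 < r → r < 1 →
              ‖deriv f ((r:ℂ) * ξ)‖
                  ≤ (1 - ‖f ((r:ℂ) * ξ)‖ ^ 2) / (1 - r ^ 2) ∧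
                (1 - ‖f ((r:ℂ) * ξ)‖ ^ 2) / (1 - r ^ 2) ≤ C * L := by
    refine ⟨4, by norm_num, ?_⟩
    intro f hf ξ hxi L hL r hr0 hr1
    obtain ⟨hdiff, hmaps, -⟩ := hf
    have habsr : ‖(r:ℂ) * ξ‖ = r := by
      rw [norm_mul, Complex.norm_real, Real.norm_eq_abs, hxi, mul_one, abs_of_pos hr0]
    constructor
    · have h := deriv_bound f hdiff hmaps ((r:ℂ) * ξ) (by rw [habsr]; exact hr1)
      rwa [habsr] at h
    · exact radial_bound f hdiff hmaps ξ hxi L hL r hr0 hr1
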